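/- arXiv:math/0404046 — 2 statements merged into one kernel-verified Lean document; each statement's English description precedes it below -/
import Mathlib

section
/- Let T be a homogeneous tree in which every vertex has degree n+1, with n ≥ 2, and let S be a finite nonempty set of vertices of T. Call a vertex v ∈ S 'surrounded in S' if every one of the n+1 components of T \ {v} intersects S. Then the number of vertices of S surrounded in S is strictly less than |S| / n. -/
/-!
Root the tree at some `r ∈ S`. To a surrounded vertex `v` and a neighbour `w` of `v` on the far
side from `r`, assign a vertex of `S` nearest to `v` in the branch at `v` through `w`. Every `v`
has at least `n` such neighbours, and the assignment is injective into `S \ {r}`: two distinct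
surrounded vertices with the same image both lie on the path from that image to `r`, and the one
nearer the image would be a closer point of `S` for the other. Hence `n · #surrounded ≤ #S - 1`.
-/

open Finset

namespace SimpleGraph

variable {V : Type*} {G : SimpleGraph V}

namespace Walk

variable [DecidableEq V]

lemma mem_support_takeUntil_or_mem_support_takeUntil {u v x y : V} (p : G.Walk u v)
    (hx : x ∈ p.support) (hy : y ∈ p.support) :
    x ∈ (p.takeUntil y hy).support ∨ y ∈ (p.takeUntil x hx).support := by
  rcases le_total (p.takeUntil x hx).length (p.takeUntil y hy).length with h | h
  · left
    rw [← p.getVert_length_takeUntil hx, ← getVert_takeUntil hy h]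
    exact getVert_mem_support _ _
  · right
    rw [← p.getVert_length_takeUntil hy, ← getVert_takeUntil hx h]
    exact getVert_mem_support _ _

end Walk

lemma IsAcyclic.dist_eq_length_of_isPath (hG : G.IsAcyclic) {u v : V} {p : G.Walk u v}
    (hp : p.IsPath) : G.dist u v = p.length := by
  obtain ⟨q, hq, hqlen⟩ := p.reachable.exists_path_of_dist
  have : q = p := congrArg Subtype.val ((hG.subsingleton_path u v).elim ⟨q, hq⟩ ⟨p, hp⟩)
  rw [← hqlen, this]

lemma IsAcyclic.exists_walk_notMem_support_and_dist_lt [DecidableEq V] (hG : G.IsAcyclic)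
    {s x v : V} {p : G.Walk s x} (hp : p.IsPath) (hv : v ∈ p.support) (hvs : v ≠ s)
    (hvx : v ≠ x) : (∃ q : G.Walk s v, x ∉ q.support) ∧ G.dist x v < G.dist x s := by
  refine ⟨⟨p.takeUntil v hv, Walk.endpoint_notMem_support_takeUntil hp hv hvx.symm⟩, ?_⟩
  calc G.dist x v ≤ (p.dropUntil v hv).length := by
        rw [dist_comm]; exact dist_le _
    _ < p.length := Walk.length_dropUntil_lt_length hv hvs
    _ = G.dist x s := by rw [dist_comm, hG.dist_eq_length_of_isPath hp]

/-- `u` lies in the component of `G - v` containing the neighbour `w` of `v`. -/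
def InBranch (G : SimpleGraph V) (v w u : V) : Prop := ∃ p : G.Walk w u, v ∉ p.support

def IsSurrounded (G : SimpleGraph V) (S : Set V) (v : V) : Prop :=
  ∀ w, G.Adj v w → ∃ u ∈ S, G.InBranch v w u

def IsNearestInBranch (G : SimpleGraph V) (S : Set V) (v w s : V) : Prop :=
  s ∈ S ∧ G.InBranch v w s ∧ ∀ u ∈ S, G.InBranch v w u → G.dist v s ≤ G.dist v u

namespace InBranch

variable {v w u x : V}

lemma ne (h : G.InBranch v w u) : u ≠ v := by
  rintro rfl
  obtain ⟨p, hp⟩ := h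
  exact hp p.end_mem_support

lemma append (h : G.InBranch v w u) (p : G.Walk u x) (hp : v ∉ p.support) :
    G.InBranch v w x := by
  obtain ⟨q, hq⟩ := h
  exact ⟨q.append p, by simp [Walk.mem_support_append_iff, hq, hp]⟩

lemma mem_support_of_not_inBranch {r : V} (h : G.InBranch v w u) (hr : ¬ G.InBranch v w r)
    (p : G.Walk u r) : v ∈ p.support := by
  by_contra hp
  exact hr (h.append p hp)

end InBranch

lemma IsAcyclic.eq_of_inBranch (hG : G.IsAcyclic) {v w w' u : V} (hw : G.Adj v w)
    (hw' : G.Adj v w') (h : G.InBranch v w u) (h' : G.InBranch v w' u) : w = w' := by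
  classical
  obtain ⟨p, hp⟩ := h
  obtain ⟨p', hp'⟩ := h'
  have hv : v ∉ (p.append p'.reverse).bypass.support := fun hv => by
    simpa [Walk.mem_support_append_iff, hp, hp'] using Walk.support_bypass_subset_support _ hv
  have := hG.mem_support_of_ne_mem_support_of_adj_of_isPath (Path.singleton hw.symm).2
    (Walk.bypass_isPath _) hw' hv
  simp only [Path.singleton_coe, Walk.support_cons, Walk.support_nil, List.mem_cons,
    List.not_mem_nil, or_false] at this
  exact (this.resolve_right hw'.ne').symm

lemma exists_isNearestInBranch (S : Finset V) {v w : V} (h : ∃ u ∈ S, G.InBranch v w u) :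
    ∃ s, G.IsNearestInBranch S v w s := by
  classical
  obtain ⟨s, hs, hmin⟩ := (S.filter (G.InBranch v w)).exists_min_image (G.dist v)
    (by simpa [Finset.Nonempty] using h)
  rw [mem_filter] at hs
  exact ⟨s, hs.1, hs.2, fun u hu hbr => hmin u (mem_filter.2 ⟨hu, hbr⟩)⟩

lemma IsAcyclic.notMem_support_of_isNearestInBranch [DecidableEq V] (hG : G.IsAcyclic)
    {S : Set V} {v w s x : V} (h : G.IsNearestInBranch S v w s) {p : G.Walk s v}
    (hp : p.IsPath) (hx : x ∈ S) (hxs : x ≠ s) (hxv : x ≠ v) : x ∉ p.support := by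
  intro hxp
  obtain ⟨⟨q, hq⟩, hlt⟩ := hG.exists_walk_notMem_support_and_dist_lt hp hxp hxs hxv
  exact (h.2.2 x hx (h.2.1.append q hq)).not_gt hlt

lemma IsAcyclic.eq_of_isNearestInBranch (hG : G.IsAcyclic) {S : Set V} {v v' w w' s r : V}
    (hreach : G.Reachable s r) (hv : v ∈ S) (hv' : v' ∈ S) (hw : G.Adj v w) (hw' : G.Adj v' w')
    (h : G.IsNearestInBranch S v w s) (h' : G.IsNearestInBranch S v' w' s)
    (hr : ¬ G.InBranch v w r) (hr' : ¬ G.InBranch v' w' r) : v = v' ∧ w = w' := by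
  classical
  have hvv' : v = v' := by
    by_contra hne
    obtain ⟨q, hq⟩ := hreach.exists_isPath
    have hvq := h.2.1.mem_support_of_not_inBranch hr q
    have hv'q := h'.2.1.mem_support_of_not_inBranch hr' q
    rcases q.mem_support_takeUntil_or_mem_support_takeUntil hvq hv'q with hmem | hmem
    · exact hG.notMem_support_of_isNearestInBranch h' (hq.takeUntil hv'q) hv
        h.2.1.ne.symm hne hmem
    · exact hG.notMem_support_of_isNearestInBranch h (hq.takeUntil hvq) hv'
        h'.2.1.ne.symm (Ne.symm hne) hmem
  subst hvv'
  exact ⟨rfl, hG.eq_of_inBranch hw hw' h.2.1 h'.2.1⟩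

lemma IsAcyclic.card_filter_inBranch_le_one (hG : G.IsAcyclic) (v r : V)
    [Fintype (G.neighborSet v)] [DecidablePred (G.InBranch v · r)] :
    #((G.neighborFinset v).filter (G.InBranch v · r)) ≤ 1 :=
  card_le_one.2 fun _ ha _ hb => by
    rw [mem_filter, mem_neighborFinset] at ha hb
    exact hG.eq_of_inBranch ha.1 hb.1 ha.2 hb.2

lemma IsAcyclic.degree_le_card_filter_not_inBranch_add_one (hG : G.IsAcyclic) (v r : V)
    [Fintype (G.neighborSet v)] [DecidablePred (G.InBranch v · r)] :
    G.degree v ≤ #((G.neighborFinset v).filter (¬ G.InBranch v · r)) + 1 := by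
  rw [← card_neighborFinset_eq_degree,
    ← card_filter_add_card_filter_not (G.InBranch v · r)]
  have := hG.card_filter_inBranch_le_one v r
  omega

theorem IsAcyclic.card_filter_isSurrounded_mul_lt [G.LocallyFinite]
    (hG : G.IsAcyclic) (hconn : G.Preconnected) {n : ℕ} (S : Finset V)
    (hdeg : ∀ v ∈ S, n + 1 ≤ G.degree v) (hS : S.Nonempty) [DecidablePred (G.IsSurrounded S)] :
    #(S.filter (G.IsSurrounded S)) * n < #S := by
  classical
  obtain ⟨r, hr⟩ := hS
  have : Nonempty V := ⟨r⟩
  set K := S.filter (G.IsSurrounded S)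
  set P := K.sigma fun v => (G.neighborFinset v).filter (¬ G.InBranch v · r)
  have hP : ∀ x ∈ P, x.1 ∈ S ∧ G.IsSurrounded S x.1 ∧ G.Adj x.1 x.2 ∧ ¬ G.InBranch x.1 x.2 r := by
    intro x hx
    simp only [P, K, mem_sigma, mem_filter, mem_neighborFinset] at hx
    exact ⟨hx.1.1, hx.1.2, hx.2⟩
  have hnearest : ∀ x ∈ P, ∃ s, G.IsNearestInBranch S x.1 x.2 s := fun x hx =>
    exists_isNearestInBranch S ((hP x hx).2.1 x.2 (hP x hx).2.2.1)
  choose! f hf using hnearest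
  have hmaps : Set.MapsTo f P (S.erase r) := fun x hx => by
    have ⟨hfS, hfbr, _⟩ := hf x hx
    exact mem_erase.2 ⟨fun hfr => (hP x hx).2.2.2 (hfr ▸ hfbr), hfS⟩
  have hinj : Set.InjOn f P := by
    rintro ⟨v, w⟩ hx ⟨v', w'⟩ hx' hfx
    obtain ⟨hv, -, hw, hr⟩ := hP _ hx
    obtain ⟨hv', -, hw', hr'⟩ := hP _ hx'
    obtain ⟨rfl, rfl⟩ := hG.eq_of_isNearestInBranch (hconn _ r) hv hv' hw hw' (hf _ hx)
      (hfx ▸ hf _ hx') hr hr'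
    rfl
  have hcard : #K * n ≤ #P := by
    rw [card_sigma, ← smul_eq_mul]
    refine card_nsmul_le_sum _ _ _ fun v hv => ?_
    have := hG.degree_le_card_filter_not_inBranch_add_one v r
    have := hdeg v (mem_filter.1 hv).1
    omega
  have := card_le_card_of_injOn f hmaps hinj
  rw [card_erase_of_mem hr] at this
  have := card_pos.2 ⟨r, hr⟩
  omega

end SimpleGraph

/-- In an infinite homogeneous tree `T` of degree `n+1` (with `n ≥ 2`), for a
finite nonempty set `S` of vertices, the number of vertices `v ∈ S` that are *surrounded in
`S`* (i.e. every component of `T \ {v}` — equivalently, the component beyond each of the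
`n+1` neighbors of `v`, reached by a walk avoiding `v` — meets `S`) is strictly less than
`|S| / n`. -/
theorem stmt_2 {V : Type*} (T : SimpleGraph V) [∀ v : V, Fintype (T.neighborSet v)]
    (n : ℕ) (hn : 2 ≤ n) (hconn : T.Connected) (hacyc : T.IsAcyclic)
    (hdeg : ∀ v : V, T.degree v = n + 1)
    (S : Finset V) (hS : S.Nonempty) :
    (({v : V | v ∈ S ∧ ∀ w : V, T.Adj v w →
        ∃ u ∈ S, ∃ p : T.Walk w u, v ∉ p.support}).ncard : ℝ) < (S.card : ℝ) / n := by
  classical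
  have hsurrounded : {v : V | v ∈ S ∧ ∀ w : V, T.Adj v w →
      ∃ u ∈ S, ∃ p : T.Walk w u, v ∉ p.support} = ↑(S.filter (T.IsSurrounded S)) := by
    ext v
    simp [SimpleGraph.IsSurrounded, SimpleGraph.InBranch]
  have hcount := hacyc.card_filter_isSurrounded_mul_lt hconn.preconnected S
    (fun v _ => (hdeg v).ge) hS
  have hn_pos : (0 : ℝ) < n := by exact_mod_cast (by omega : 0 < n)
  rw [hsurrounded, Set.ncard_coe_finset, lt_div_iff₀ hn_pos]
  exact_mod_cast hcount
end

section
/- For every integer n ≥ 5, the upper bound (√(9 + 16/(n−1)) − 1)/(2(n+1)) on λ₁ is strictly less than the lower bound 1/(2√n) on λ_a, i.e. (√(9 + 16/(n−1)) − 1)/(2(n+1)) < 1/(2√n). -/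
/-- For every integer `n ≥ 5`, the upper bound
`(√(9 + 16/(n−1)) − 1)/(2(n+1))` on `λ₁` is strictly less than the lower bound
`1/(2√n)` on `λ_a`. -/
theorem stmt_7 (n : ℕ) (hn : 5 ≤ n) :
    (Real.sqrt (9 + 16 / ((n : ℝ) - 1)) - 1) / (2 * ((n : ℝ) + 1)) <
      1 / (2 * Real.sqrt (n : ℝ)) := by
  have hn5 : (5 : ℝ) ≤ (n : ℝ) := by exact_mod_cast hn
  have hm : (4 : ℝ) ≤ (n : ℝ) - 1 := by linarith
  have hmpos : (0 : ℝ) < (n : ℝ) - 1 := by linarith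
  have harg : (0 : ℝ) ≤ 9 + 16 / ((n : ℝ) - 1) := by positivity
  set a := Real.sqrt (9 + 16 / ((n : ℝ) - 1)) with ha
  set s := Real.sqrt (n : ℝ) with hs
  have ha0 : 0 ≤ a := Real.sqrt_nonneg _
  have hs0 : 0 ≤ s := Real.sqrt_nonneg _
  have ha2 : a ^ 2 = 9 + 16 / ((n : ℝ) - 1) := Real.sq_sqrt harg
  have hs2 : s ^ 2 = (n : ℝ) := Real.sq_sqrt (by linarith)
  have hdiv : 16 / ((n : ℝ) - 1) ≤ 4 := by
    rw [div_le_iff₀ hmpos]; linarith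
  have ha13 : a ^ 2 ≤ 13 := by linarith
  have hsge : (2.2 : ℝ) ≤ s := by nlinarith
  have hspos : (0 : ℝ) < 2 * s := by linarith
  have hnpos : (0 : ℝ) < 2 * ((n : ℝ) + 1) := by linarith
  rw [div_lt_div_iff₀ hnpos hspos]
  have key : (a - 1) * s < (n : ℝ) + 1 := by
    nlinarith [sq_nonneg (100 * a - 361), sq_nonneg (s - a), sq_nonneg (10 * s - 22)]
  nlinarith [key]
end
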